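/- arXiv:2111.02257 — 2 statements merged into one kernel-verified Lean document; each statement's English description precedes it below -/
import Mathlib

section
/- Completeness of verification for honestly generated linkable ring signatures: Let n ≥ 1, let pk : Fin n → E be a ring of public keys, let π be an index with pk π = sk • G for a secret key sk ∈ ZMod g, let L ∈ E and set the tag T = sk • L. Let h : E × E → ZMod g be an arbitrary function (modeling the hash c ↦ H(m ∥ T ∥ A ∥ B) for a fixed message m and tag T). Generate a signature as in the scheme: choose u, s'_π ∈ ZMod g, set c_π = h(s'_π • G + u • pk_π, s'_π • L + u • T); then, traversing the indices cyclically i = π+1, …, n, 1, …, π−1 (indices mod n), choose s_i ∈ ZMod g and set c_i = h(s_i • G + c_{i−1} • pk_i, s_i • L + c_{i−1} • T); finally set s_π = s'_π + sk * (u − c_{π−1}). Then the verification recomputation — starting from c'_0 = c_n and setting, for i = 1, …, n, A'_i = s_i • G + c'_{i−1} • pk_i, B'_i = s_i • L + c'_{i−1} • T, c'_i = h(A'_i, B'_i) — satisfies c'_i = c_i for every i = 1, …, n; in particular c'_n = c_n = c'_0, so the Verify algorithm accepts the honestly generated signature. -/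
/-!
The signer's response `s_π = s'_π + sk (u - c_{π-1})` is chosen so that, because
`pk_π = sk • G` and `T = sk • L`, the pair `(s_π • G + c_{π-1} • pk_π, s_π • L + c_{π-1} • T)`
equals the commitment `(s'_π • G + u • pk_π, s'_π • L + u • T)` hashed into `c_π`.
Hence the relation `c_i = h (s_i • G + c_{i-1} • pk_i, s_i • L + c_{i-1} • T)` holds at every
index of the ring, including `π`, and the verification chain, started at the anchor `c_n`,
obeys the same recurrence and so retraces `c_1, …, c_n`.
-/

theorem Fin.val_zero_sub_one {n : ℕ} [NeZero n] : ((0 : Fin n) - 1).val = n - 1 := by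
  obtain ⟨m, rfl⟩ := Nat.exists_eq_succ_of_ne_zero (NeZero.ne n)
  simp

theorem schnorr_response_smul_add_smul {R M : Type*} [CommRing R] [AddCommGroup M] [Module R M]
    (x s' u c : R) (P : M) : (s' + x * (u - c)) • P + c • (x • P) = s' • P + u • (x • P) := by
  module

section CyclicRecurrence

variable {α : Type*} {n : ℕ} [NeZero n] {f : Fin n → α → α} {c : Fin n → α} {v : ℕ → α}

theorem eq_apply_sub_one_of_cyclic_recurrence (hc : ∀ i, c i = f i (c (i - 1)))
    (hv0 : v 0 = c ⟨n - 1, Nat.sub_lt (Nat.pos_of_neZero n) Nat.one_pos⟩)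
    (hv : ∀ k (hk : k < n), v (k + 1) = f ⟨k, hk⟩ (v k)) :
    ∀ k (hk : k < n), v k = c (⟨k, hk⟩ - 1)
  | 0, _ => hv0.trans (congrArg c (Fin.ext Fin.val_zero_sub_one.symm))
  | k + 1, hk => by
    rw [hv k (by omega), eq_apply_sub_one_of_cyclic_recurrence hc hv0 hv k (by omega),
      ← hc]
    congr 1
    ext
    rw [Fin.val_sub_one_of_ne_zero (by simp [Fin.ext_iff])]
    rfl

theorem succ_eq_of_cyclic_recurrence (hc : ∀ i, c i = f i (c (i - 1)))
    (hv0 : v 0 = c ⟨n - 1, Nat.sub_lt (Nat.pos_of_neZero n) Nat.one_pos⟩)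
    (hv : ∀ k (hk : k < n), v (k + 1) = f ⟨k, hk⟩ (v k)) (k : ℕ) (hk : k < n) :
    v (k + 1) = c ⟨k, hk⟩ := by
  rw [hv k hk, eq_apply_sub_one_of_cyclic_recurrence hc hv0 hv k hk, ← hc]

end CyclicRecurrence

/-- Index `i : Fin n` is the paper's index `i + 1`, so `v k` is the paper's `c'_k`. -/
theorem verify_accepts_honest_signature_general
    {g : ℕ} {E : Type*} [AddCommGroup E] [Module (ZMod g) E]
    (n : ℕ) [NeZero n]
    (G L : E) (pk : Fin n → E) (π : Fin n) (sk : ZMod g)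
    (hpk : pk π = sk • G)
    (T : E) (hT : T = sk • L)
    (h : E × E → ZMod g)
    (u s' : ZMod g)
    (s c : Fin n → ZMod g)
    (hcπ : c π = h (s' • G + u • pk π, s' • L + u • T))
    (hc : ∀ i : Fin n, i ≠ π →
      c i = h (s i • G + c (i - 1) • pk i, s i • L + c (i - 1) • T))
    (hsπ : s π = s' + sk * (u - c (π - 1)))
    (v : ℕ → ZMod g)
    (hv0 : v 0 = c ⟨n - 1, Nat.sub_lt (Nat.pos_of_neZero n) Nat.one_pos⟩)
    (hv : ∀ k (hk : k < n),
      v (k + 1) = h (s ⟨k, hk⟩ • G + v k • pk ⟨k, hk⟩, s ⟨k, hk⟩ • L + v k • T)) :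
    (∀ k (hk : k < n), v (k + 1) = c ⟨k, hk⟩) ∧ v n = v 0 := by
  have hring : ∀ i, c i = h (s i • G + c (i - 1) • pk i, s i • L + c (i - 1) • T) := by
    intro i
    by_cases hi : i = π
    · subst hi
      rw [hcπ, hsπ, hpk, hT, schnorr_response_smul_add_smul, schnorr_response_smul_add_smul]
    · exact hc i hi
  have hretrace := succ_eq_of_cyclic_recurrence
    (f := fun i x ↦ h (s i • G + x • pk i, s i • L + x • T)) hring hv0 hv
  refine ⟨hretrace, ?_⟩
  obtain ⟨m, rfl⟩ := Nat.exists_eq_succ_of_ne_zero (NeZero.ne n)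
  rw [hretrace m m.lt_succ_self, hv0]
  rfl

/-- Completeness of verification for honestly generated linkable ring signatures.
Indices `0, …, n-1` of `Fin n` correspond to the paper's indices `1, …, n`; the
cyclic predecessor of index `i : Fin n` is `i - 1`.  The hypotheses on `c` and `s`
state that the signature was generated as in the scheme (with hash `h`, signer
index `π`, secret key `sk`, `pk π = sk • G`, tag `T = sk • L`, and randomness
`u, s'`).  The function `v` is the verification recomputation chain, starting from
`v 0 = c_n` (the anchor) and computing `v (k+1) = h (A'_{k+1}, B'_{k+1})`.  The
conclusion is `c'_i = c_i` for every `i = 1, …, n`, and in particular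
`c'_n = c'_0`, so Verify accepts. -/
theorem verify_accepts_honest_signature
    {g : ℕ} [Fact (Nat.Prime g)] {E : Type*} [AddCommGroup E] [Module (ZMod g) E]
    (n : ℕ) [NeZero n]
    (G L : E) (pk : Fin n → E) (π : Fin n) (sk : ZMod g)
    (hpk : pk π = sk • G)
    (T : E) (hT : T = sk • L)
    (h : E × E → ZMod g)
    (u s' : ZMod g)
    (s c : Fin n → ZMod g)
    (hcπ : c π = h (s' • G + u • pk π, s' • L + u • T))
    (hc : ∀ i : Fin n, i ≠ π →
      c i = h (s i • G + c (i - 1) • pk i, s i • L + c (i - 1) • T))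
    (hsπ : s π = s' + sk * (u - c (π - 1)))
    (v : ℕ → ZMod g)
    (hv0 : v 0 = c ⟨n - 1, Nat.sub_lt (Nat.pos_of_neZero n) Nat.one_pos⟩)
    (hv : ∀ k (hk : k < n),
      v (k + 1) = h (s ⟨k, hk⟩ • G + v k • pk ⟨k, hk⟩, s ⟨k, hk⟩ • L + v k • T)) :
    (∀ k (hk : k < n), v (k + 1) = c ⟨k, hk⟩) ∧ v n = v 0 :=
  verify_accepts_honest_signature_general n G L pk π sk hpk T hT h u s' s c hcπ hc hsπ v hv0 hv
end

section
/- Combined key-and-tag extraction from a fork at a common index: Let G, L, T ∈ E, pk ∈ E, and s, s*, c, c* ∈ ZMod g with c ≠ c*. Suppose both fork branches agree on the verification values at the fork index, i.e. s • G + c • pk = s* • G + c* • pk and s • L + c • T = s* • L + c* • T. Then the extracted scalar sk := (s − s*) * (c* − c)⁻¹ ∈ ZMod g simultaneously satisfies pk = sk • G and T = sk • L; that is, the fork yields a secret key matching the public key at the fork index whose associated linkability tag is exactly the tag of the forged signature. -/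
theorem eq_smul_of_add_smul_eq_add_smul {K M : Type*} [Field K] [AddCommGroup M] [Module K M]
    {x y : M} {s s' c c' : K} (hc : c ≠ c') (h : s • x + c • y = s' • x + c' • y) :
    y = ((s - s') * (c' - c)⁻¹) • x := by
  have hdiff : (c' - c) • y = (s - s') • x := by
    rw [sub_smul, sub_smul]
    linear_combination (norm := abel) -h
  rw [mul_comm, mul_smul, ← hdiff, inv_smul_smul₀ (sub_ne_zero.mpr hc.symm)]

/-- Combined key-and-tag extraction from a fork at a common index: if both fork
branches agree on the verification values `s • G + c • pk = s* • G + c* • pk` and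
`s • L + c • T = s* • L + c* • T` with `c ≠ c*`, then the extracted scalar
`sk = (s - s*) * (c* - c)⁻¹` satisfies both `pk = sk • G` and `T = sk • L`. -/
theorem key_and_tag_extraction_from_fork
    {g : ℕ} [Fact (Nat.Prime g)] {E : Type*} [AddCommGroup E] [Module (ZMod g) E]
    (G L T pk : E) (s sstar c cstar : ZMod g)
    (hcc : c ≠ cstar)
    (hA : s • G + c • pk = sstar • G + cstar • pk)
    (hB : s • L + c • T = sstar • L + cstar • T) :
    pk = ((s - sstar) * (cstar - c)⁻¹) • G ∧
      T = ((s - sstar) * (cstar - c)⁻¹) • L :=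
  ⟨eq_smul_of_add_smul_eq_add_smul hcc hA, eq_smul_of_add_smul_eq_add_smul hcc hB⟩
end
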